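/- arXiv:2106.13458 — 2 statements merged into one kernel-verified Lean document; each statement's English description precedes it below -/
import Mathlib

section
/- Let (A, [·,·], ρ) be a Lie-Rinehart algebra over O and let (E, d, π, ℓ₂) be an almost differential graded Lie algebroid of A. For x ∈ E_{-i}, y ∈ E_{-j}, z ∈ E_{-k} define the Jacobiator Jac(x, y, z) := ℓ₂(ℓ₂(x, y), z) + (−1)^{jk} ℓ₂(ℓ₂(x, z), y) + (−1)^{ij + ik} ℓ₂(ℓ₂(y, z), x) ∈ E_{-(i+j+k-2)}. Then (with d := 0 on E_{-1}): (i) Jac is O-linear in each of its three arguments, i.e. Jac(f·x, y, z) = f·Jac(x, y, z) for all f ∈ O (and similarly in the other arguments); (ii) π(Jac(x, y, z)) = 0 for all x, y, z ∈ E_{-1}; (iii) d(Jac(x, y, z)) = Jac(d x, y, z) + (−1)^{i} Jac(x, d y, z) + (−1)^{i+j} Jac(x, y, d z) for all x ∈ E_{-i}, y ∈ E_{-j}, z ∈ E_{-k}. -/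
/-- A Lie-Rinehart algebra over a commutative unital `K`-algebra `O`. -/
structure LieRinehart (K O A : Type*) [Field K] [CharZero K] [CommRing O] [Algebra K O]
    [AddCommGroup A] [Module K A] [Module O A] [IsScalarTower K O A] where
  bracket : A →ₗ[K] A →ₗ[K] A
  anchor : A →ₗ[O] Derivation K O O
  antisymm : ∀ a b : A, bracket a b = - bracket b a
  jacobi : ∀ a b c : A,
    bracket a (bracket b c) = bracket (bracket a b) c + bracket b (bracket a c)
  anchor_bracket : ∀ a b : A, anchor (bracket a b) = ⁅anchor a, anchor b⁆
  leibniz : ∀ (a b : A) (f : O),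
    bracket a (f • b) = f • bracket a b + (anchor a) f • b

/-- The Jacobiator of a graded `2`-ary bracket `ℓ₂`, evaluated on arguments of degrees
`-(m+1)`, `-(n+1)`, `-(p+1)` respectively:
`Jac(x,y,z) = ℓ₂(ℓ₂(x,y),z) + (-1)^{jk} ℓ₂(ℓ₂(x,z),y) + (-1)^{ij+ik} ℓ₂(ℓ₂(y,z),x)`
where `i = m+1`, `j = n+1`, `k = p+1`. -/
def Jacobiator {K M : Type*} [Field K] [AddCommGroup M] [Module K M]
    (ℓ₂ : M →ₗ[K] M →ₗ[K] M) (m n p : ℕ) (x y z : M) : M :=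
  ℓ₂ (ℓ₂ x y) z + ((-1 : K) ^ ((n + 1) * (p + 1))) • ℓ₂ (ℓ₂ x z) y +
    ((-1 : K) ^ ((m + 1) * (n + 1) + (m + 1) * (p + 1))) • ℓ₂ (ℓ₂ y z) x



/-- Sign comparison: `(-1)^e1 = (-1)^e2` whenever `e1 + e2` is even. -/
lemma sgn_eq' {R : Type*} [Monoid R] [HasDistribNeg R] {e1 e2 : ℕ} (h : Even (e1 + e2)) :
    (-1:R)^e1 = (-1:R)^e2 := by
  calc (-1:R)^e1 = (-1)^e1 * ((-1)^(e2+e2)) := by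
        rw [Even.neg_one_pow ⟨e2, rfl⟩, mul_one]
    _ = (-1)^(e1+e2) * (-1)^e2 := by rw [← pow_add, ← pow_add, add_assoc]
    _ = (-1)^e2 := by rw [h.neg_one_pow, one_mul]

/-- The anchor map extended by zero to negative degrees. -/
def rho {K O A M : Type*} [Field K] [CharZero K] [CommRing O] [Algebra K O]
    [AddCommGroup A] [Module K A] [Module O A] [IsScalarTower K O A]
    [AddCommGroup M] [Module K M] [Module O M] [IsScalarTower K O M]
    (L : LieRinehart K O A) (π : M →ₗ[O] A) : ℕ → M → O → O
  | 0, u, f => L.anchor (π u) f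
  | _+1, _, _ => 0

lemma neg_one_pow_mul_two {R : Type*} [Monoid R] [HasDistribNeg R] (k : ℕ) :
    (-1:R)^(k*2) = 1 := by
  rw [mul_comm, pow_mul, neg_one_sq, one_pow]

lemma neg_one_pow_two_mul {R : Type*} [Monoid R] [HasDistribNeg R] (k : ℕ) :
    (-1:R)^(2*k) = 1 := by
  rw [pow_mul, neg_one_sq, one_pow]

lemma neg_one_pow_mul_even' {R : Type*} [Monoid R] [HasDistribNeg R] (k c : ℕ) :
    (-1:R)^(k*(c*2)) = 1 := by
  rw [← mul_assoc, mul_comm (k*c) 2, pow_mul, neg_one_sq, one_pow]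

lemma neg_one_pow_mul_odd' {R : Type*} [Monoid R] [HasDistribNeg R] (k c : ℕ) :
    (-1:R)^(k*(c*2+1)) = (-1:R)^k := by
  rw [mul_add, mul_one, pow_add, neg_one_pow_mul_even', one_mul]

lemma neg_one_pow_mul_three {R : Type*} [Monoid R] [HasDistribNeg R] (k : ℕ) :
    (-1:R)^(k*3) = (-1:R)^k := by simpa using neg_one_pow_mul_odd' k 1

lemma neg_one_pow_mul_four {R : Type*} [Monoid R] [HasDistribNeg R] (k : ℕ) :
    (-1:R)^(k*4) = 1 := by simpa using neg_one_pow_mul_even' k 2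

lemma neg_one_pow_mul_five {R : Type*} [Monoid R] [HasDistribNeg R] (k : ℕ) :
    (-1:R)^(k*5) = (-1:R)^k := by simpa using neg_one_pow_mul_odd' k 2

lemma neg_one_pow_mul_six {R : Type*} [Monoid R] [HasDistribNeg R] (k : ℕ) :
    (-1:R)^(k*6) = 1 := by simpa using neg_one_pow_mul_even' k 3

lemma neg_one_pow_mul_seven {R : Type*} [Monoid R] [HasDistribNeg R] (k : ℕ) :
    (-1:R)^(k*7) = (-1:R)^k := by simpa using neg_one_pow_mul_odd' k 3

lemma neg_one_pow_mul_eight {R : Type*} [Monoid R] [HasDistribNeg R] (k : ℕ) :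
    (-1:R)^(k*8) = 1 := by simpa using neg_one_pow_mul_even' k 4


/-- For an almost differential graded Lie algebroid `(E, d, π, ℓ₂)` of a
Lie-Rinehart algebra `A` (graded pieces encoded as an internal direct sum, `E n` playing
the role of `E_{-(n+1)}`), the Jacobiator satisfies: (i) it is `O`-linear in each
argument; (ii) `π ∘ Jac = 0` on triples of elements of degree `-1`; (iii)
`d(Jac(x,y,z)) = Jac(dx,y,z) + (-1)^i Jac(x,dy,z) + (-1)^{i+j} Jac(x,y,dz)`
(with `d := 0` on `E_{-1}`). -/
theorem statement2 (K O A M : Type*) [Field K] [CharZero K] [CommRing O] [Algebra K O]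
    [AddCommGroup A] [Module K A] [Module O A] [IsScalarTower K O A]
    [AddCommGroup M] [Module K M] [Module O M] [IsScalarTower K O M]
    (L : LieRinehart K O A)
    (E : ℕ → Submodule O M)
    (hInternal : DirectSum.IsInternal E)
    (d : M →ₗ[O] M) (π : M →ₗ[O] A)
    (hd : ∀ n, ∀ x ∈ E (n + 1), d x ∈ E n)
    (hd0 : ∀ x ∈ E 0, d x = 0)
    (hdd : ∀ n, ∀ x ∈ E n, d (d x) = 0)
    (hπd : ∀ x ∈ E 1, π (d x) = 0)
    (ℓ₂ : M →ₗ[K] M →ₗ[K] M)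
    (hgrad : ∀ m n, ∀ x ∈ E m, ∀ y ∈ E n, ℓ₂ x y ∈ E (m + n))
    (hsym : ∀ m n, ∀ x ∈ E m, ∀ y ∈ E n,
      ℓ₂ x y = ((-1 : K) ^ ((m + 1) * (n + 1))) • ℓ₂ y x)
    (hleib₁ : ∀ x ∈ E 0, ∀ n, ∀ y ∈ E n, ∀ f : O,
      ℓ₂ x (f • y) = f • ℓ₂ x y + (L.anchor (π x)) f • y)
    (hleib₂ : ∀ m, ∀ x ∈ E (m + 1), ∀ n, ∀ y ∈ E n, ∀ f : O,
      ℓ₂ x (f • y) = f • ℓ₂ x y)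
    (hder : ∀ m n, 1 ≤ m + n → ∀ x ∈ E m, ∀ y ∈ E n,
      d (ℓ₂ x y) + ℓ₂ (d x) y + ((-1 : K) ^ (m + 1)) • ℓ₂ x (d y) = 0)
    (hπbr : ∀ x ∈ E 0, ∀ y ∈ E 0, π (ℓ₂ x y) = L.bracket (π x) (π y)) :
    -- (i) the Jacobiator is O-linear in each argument
    (∀ m n p, ∀ x ∈ E m, ∀ y ∈ E n, ∀ z ∈ E p, ∀ f : O,
      Jacobiator ℓ₂ m n p (f • x) y z = f • Jacobiator ℓ₂ m n p x y z ∧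
      Jacobiator ℓ₂ m n p x (f • y) z = f • Jacobiator ℓ₂ m n p x y z ∧
      Jacobiator ℓ₂ m n p x y (f • z) = f • Jacobiator ℓ₂ m n p x y z) ∧
    -- (ii) π kills the Jacobiator of degree -1 elements
    (∀ x ∈ E 0, ∀ y ∈ E 0, ∀ z ∈ E 0, π (Jacobiator ℓ₂ 0 0 0 x y z) = 0) ∧
    -- (iii) compatibility of the Jacobiator with d
    (∀ m n p, ∀ x ∈ E m, ∀ y ∈ E n, ∀ z ∈ E p,
      d (Jacobiator ℓ₂ m n p x y z)
        = Jacobiator ℓ₂ (m - 1) n p (d x) y z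
          + ((-1 : K) ^ (m + 1)) • Jacobiator ℓ₂ m (n - 1) p x (d y) z
          + ((-1 : K) ^ (m + n)) • Jacobiator ℓ₂ m n (p - 1) x y (d z)) := by
  classical
  -- Leibniz rule in the second argument, uniform in the degree
  have leibA : ∀ q, ∀ u ∈ E q, ∀ r, ∀ v ∈ E r, ∀ f : O,
      ℓ₂ u (f • v) = f • ℓ₂ u v + rho L π q u f • v := by
    intro q
    cases q with
    | zero => intro u hu r v hv f; simpa [rho] using hleib₁ u hu r v hv f
    | succ q => intro u hu r v hv f; simp [rho, hleib₂ q u hu r v hv f]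
  -- Leibniz rule in the first argument
  have leibB : ∀ q, ∀ u ∈ E q, ∀ r, ∀ v ∈ E r, ∀ f : O,
      ℓ₂ (f • u) v = f • ℓ₂ u v + ((-1:K)^((q+1)*(r+1))) • (rho L π r v f • u) := by
    intro q u hu r v hv f
    rw [hsym q r (f • u) ((E q).smul_mem f hu) v hv, leibA r v hv q u hu f,
      hsym r q v hv u hu]
    match_scalars <;> ring_nf <;>
      simp only [neg_one_pow_mul_two, neg_one_pow_two_mul, neg_one_pow_mul_three, neg_one_pow_mul_four, neg_one_pow_mul_five, neg_one_pow_mul_six, neg_one_pow_mul_seven, neg_one_pow_mul_eight, one_mul, mul_one] <;> try ring1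
  -- the extended compatibility of d with ℓ₂
  have hder' : ∀ q, ∀ u ∈ E q, ∀ r, ∀ v ∈ E r,
      d (ℓ₂ u v) = -(ℓ₂ (d u) v) - ((-1:K)^(q+1)) • ℓ₂ u (d v) := by
    intro q u hu r v hv
    rcases Nat.eq_zero_or_pos (q + r) with h | h
    · obtain ⟨hq, hr⟩ := Nat.add_eq_zero.mp h
      subst hq; subst hr
      rw [hd0 _ (hgrad 0 0 u hu v hv), hd0 u hu, hd0 v hv]
      simp
    · have h2 := hder q r h u hu v hv
      rw [add_assoc, add_eq_zero_iff_eq_neg] at h2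
      rw [h2, neg_add]; abel
  -- O-linearity of the Jacobiator in the third argument
  have lin3 : ∀ m n p, ∀ x ∈ E m, ∀ y ∈ E n, ∀ z ∈ E p, ∀ f : O,
      Jacobiator ℓ₂ m n p x y (f • z) = f • Jacobiator ℓ₂ m n p x y z := by
    intro m n p x hx y hy z hz f
    have hxy := hgrad m n x hx y hy
    have hxz := hgrad m p x hx z hz
    have hyz := hgrad n p y hy z hz
    simp only [Jacobiator]
    rw [leibA (m+n) _ hxy p z hz f, leibA m x hx p z hz f, leibA n y hy p z hz f]
    simp only [map_add, LinearMap.add_apply]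
    rw [leibB (m+p) _ hxz n y hy f, leibB p z hz n y hy (rho L π m x f),
      leibB (n+p) _ hyz m x hx f, leibB p z hz m x hx (rho L π n y f),
      hsym p n z hz y hy, hsym p m z hz x hx]
    cases m with
    | zero =>
      cases n with
      | zero =>
        rw [show rho L π (0+0) (ℓ₂ x y) f = L.anchor (π (ℓ₂ x y)) f from rfl,
          hπbr x hx y hy, L.anchor_bracket, Derivation.commutator_apply]
        simp only [rho]
        match_scalars <;> ring_nf <;>
          simp only [neg_one_pow_mul_two, neg_one_pow_two_mul, neg_one_pow_mul_three, neg_one_pow_mul_four, neg_one_pow_mul_five, neg_one_pow_mul_six, neg_one_pow_mul_seven, neg_one_pow_mul_eight, one_mul, mul_one] <;> try ring1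
      | succ n =>
        simp only [rho, zero_smul, smul_zero, add_zero, map_zero, LinearMap.zero_apply]
        match_scalars <;> ring_nf <;>
          simp only [neg_one_pow_mul_two, neg_one_pow_two_mul, neg_one_pow_mul_three, neg_one_pow_mul_four, neg_one_pow_mul_five, neg_one_pow_mul_six, neg_one_pow_mul_seven, neg_one_pow_mul_eight, one_mul, mul_one] <;> try ring1
    | succ m =>
      cases n with
      | zero =>
        simp only [rho, zero_smul, smul_zero, add_zero, map_zero, LinearMap.zero_apply]
        match_scalars <;> ring_nf <;>
          simp only [neg_one_pow_mul_two, neg_one_pow_two_mul, neg_one_pow_mul_three, neg_one_pow_mul_four, neg_one_pow_mul_five, neg_one_pow_mul_six, neg_one_pow_mul_seven, neg_one_pow_mul_eight, one_mul, mul_one] <;> try ring1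
      | succ n =>
        simp only [rho, zero_smul, smul_zero, add_zero, map_zero, LinearMap.zero_apply]
        match_scalars <;> ring_nf <;>
          simp only [neg_one_pow_mul_two, neg_one_pow_two_mul, neg_one_pow_mul_three, neg_one_pow_mul_four, neg_one_pow_mul_five, neg_one_pow_mul_six, neg_one_pow_mul_seven, neg_one_pow_mul_eight, one_mul, mul_one] <;> try ring1
  -- swapping the last two arguments of the Jacobiator
  have jswap : ∀ m n p, ∀ x ∈ E m, ∀ y ∈ E n, ∀ z ∈ E p,
      Jacobiator ℓ₂ m n p x y z
        = ((-1:K)^((n+1)*(p+1))) • Jacobiator ℓ₂ m p n x z y := by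
    intro m n p x hx y hy z hz
    simp only [Jacobiator]
    rw [hsym p n z hz y hy]
    simp only [map_smul, LinearMap.smul_apply]
    match_scalars <;> ring_nf <;>
      simp only [neg_one_pow_mul_two, neg_one_pow_two_mul, neg_one_pow_mul_three, neg_one_pow_mul_four, neg_one_pow_mul_five, neg_one_pow_mul_six, neg_one_pow_mul_seven, neg_one_pow_mul_eight, one_mul, mul_one] <;> try ring1
  -- cyclic rotation of the arguments of the Jacobiator
  have jcyc : ∀ m n p, ∀ x ∈ E m, ∀ y ∈ E n, ∀ z ∈ E p,
      Jacobiator ℓ₂ m n p x y z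
        = ((-1:K)^((m+1)*(n+1)+(m+1)*(p+1))) • Jacobiator ℓ₂ n p m y z x := by
    intro m n p x hx y hy z hz
    simp only [Jacobiator]
    rw [hsym n m y hy x hx, hsym p m z hz x hx]
    simp only [map_smul, LinearMap.smul_apply]
    match_scalars <;> ring_nf <;>
      simp only [neg_one_pow_mul_two, neg_one_pow_two_mul, neg_one_pow_mul_three, neg_one_pow_mul_four, neg_one_pow_mul_five, neg_one_pow_mul_six, neg_one_pow_mul_seven, neg_one_pow_mul_eight, one_mul, mul_one] <;> try ring1
  refine ⟨?_, ?_, ?_⟩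
  · -- (i)
    intro m n p x hx y hy z hz f
    refine ⟨?_, ?_, lin3 m n p x hx y hy z hz f⟩
    · rw [jcyc m n p (f • x) ((E m).smul_mem f hx) y hy z hz,
        lin3 n p m y hy z hz x hx f, jcyc m n p x hx y hy z hz]
      match_scalars <;> ring_nf
    · rw [jswap m n p x hx (f • y) ((E n).smul_mem f hy) z hz,
        lin3 m p n x hx z hz y hy f, jswap m n p x hx y hy z hz]
      match_scalars <;> ring_nf
  · -- (ii)
    intro x hx y hy z hz
    simp only [Jacobiator, map_add, LinearMap.map_smul_of_tower]
    rw [hπbr _ (hgrad 0 0 x hx y hy) z hz, hπbr x hx y hy,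
      hπbr _ (hgrad 0 0 x hx z hz) y hy, hπbr x hx z hz,
      hπbr _ (hgrad 0 0 y hy z hz) x hx, hπbr y hy z hz]
    norm_num
    rw [L.antisymm (L.bracket (π y) (π z)) (π x),
      L.antisymm (L.bracket (π x) (π z)) (π y), L.jacobi (π x) (π y) (π z)]
    abel
  · -- (iii)
    intro m n p x hx y hy z hz
    have hxy := hgrad m n x hx y hy
    have hxz := hgrad m p x hx z hz
    have hyz := hgrad n p y hy z hz
    simp only [Jacobiator, map_add, LinearMap.map_smul_of_tower]
    rw [hder' (m+n) _ hxy p z hz, hder' (m+p) _ hxz n y hy, hder' (n+p) _ hyz m x hx,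
      hder' m x hx n y hy, hder' m x hx p z hz, hder' n y hy p z hz]
    simp only [map_add, map_neg, map_smul, map_sub, LinearMap.add_apply,
      LinearMap.neg_apply, LinearMap.smul_apply, LinearMap.sub_apply]
    cases m with
    | zero =>
      rw [hd0 x hx]
      cases n with
      | zero =>
        rw [hd0 y hy]
        cases p with
        | zero =>
          rw [hd0 z hz]
          simp
        | succ p =>
          simp only [Nat.add_sub_cancel, Nat.zero_sub, map_zero, LinearMap.zero_apply,
            smul_zero, zero_smul, neg_zero, add_zero, zero_add]
          match_scalars <;> ring_nf <;>
            simp only [neg_one_pow_mul_two, neg_one_pow_two_mul, neg_one_pow_mul_three, neg_one_pow_mul_four, neg_one_pow_mul_five, neg_one_pow_mul_six, neg_one_pow_mul_seven, neg_one_pow_mul_eight, one_mul, mul_one] <;> try ring1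
      | succ n =>
        cases p with
        | zero =>
          rw [hd0 z hz]
          simp only [Nat.add_sub_cancel, Nat.zero_sub, map_zero, LinearMap.zero_apply,
            smul_zero, zero_smul, neg_zero, add_zero, zero_add]
          match_scalars <;> ring_nf <;>
            simp only [neg_one_pow_mul_two, neg_one_pow_two_mul, neg_one_pow_mul_three, neg_one_pow_mul_four, neg_one_pow_mul_five, neg_one_pow_mul_six, neg_one_pow_mul_seven, neg_one_pow_mul_eight, one_mul, mul_one] <;> try ring1
        | succ p =>
          simp only [Nat.add_sub_cancel, Nat.zero_sub, map_zero, LinearMap.zero_apply,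
            smul_zero, zero_smul, neg_zero, add_zero, zero_add]
          match_scalars <;> ring_nf <;>
            simp only [neg_one_pow_mul_two, neg_one_pow_two_mul, neg_one_pow_mul_three, neg_one_pow_mul_four, neg_one_pow_mul_five, neg_one_pow_mul_six, neg_one_pow_mul_seven, neg_one_pow_mul_eight, one_mul, mul_one] <;> try ring1
    | succ m =>
      cases n with
      | zero =>
        rw [hd0 y hy]
        cases p with
        | zero =>
          rw [hd0 z hz]
          simp only [Nat.add_sub_cancel, Nat.zero_sub, map_zero, LinearMap.zero_apply,
            smul_zero, zero_smul, neg_zero, add_zero, zero_add]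
          match_scalars <;> ring_nf <;>
            simp only [neg_one_pow_mul_two, neg_one_pow_two_mul, neg_one_pow_mul_three, neg_one_pow_mul_four, neg_one_pow_mul_five, neg_one_pow_mul_six, neg_one_pow_mul_seven, neg_one_pow_mul_eight, one_mul, mul_one] <;> try ring1
        | succ p =>
          simp only [Nat.add_sub_cancel, Nat.zero_sub, map_zero, LinearMap.zero_apply,
            smul_zero, zero_smul, neg_zero, add_zero, zero_add]
          match_scalars <;> ring_nf <;>
            simp only [neg_one_pow_mul_two, neg_one_pow_two_mul, neg_one_pow_mul_three, neg_one_pow_mul_four, neg_one_pow_mul_five, neg_one_pow_mul_six, neg_one_pow_mul_seven, neg_one_pow_mul_eight, one_mul, mul_one] <;> try ring1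
      | succ n =>
        cases p with
        | zero =>
          rw [hd0 z hz]
          simp only [Nat.add_sub_cancel, Nat.zero_sub, map_zero, LinearMap.zero_apply,
            smul_zero, zero_smul, neg_zero, add_zero, zero_add]
          match_scalars <;> ring_nf <;>
            simp only [neg_one_pow_mul_two, neg_one_pow_two_mul, neg_one_pow_mul_three, neg_one_pow_mul_four, neg_one_pow_mul_five, neg_one_pow_mul_six, neg_one_pow_mul_seven, neg_one_pow_mul_eight, one_mul, mul_one] <;> try ring1
        | succ p =>
          simp only [Nat.add_sub_cancel]
          match_scalars <;> ring_nf <;>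
            simp only [neg_one_pow_mul_two, neg_one_pow_two_mul, neg_one_pow_mul_three, neg_one_pow_mul_four, neg_one_pow_mul_five, neg_one_pow_mul_six, neg_one_pow_mul_seven, neg_one_pow_mul_eight, one_mul, mul_one] <;> try ring1
end

section
/- Let O be a commutative unital ring and A an O-module. Let (R, d^R) be a chain complex of projective O-modules concentrated in degrees ≤ −1 (O-modules R_{-1}, R_{-2}, … with O-linear maps d^R : R_{-i-1} → R_{-i}, d^R ∘ d^R = 0) together with an O-linear map π^R : R_{-1} → A satisfying π^R ∘ d^R = 0. Then there exist: a chain complex (E, d^E) of projective O-modules concentrated in degrees ≤ −1 together with an O-linear map π^E : E_{-1} → A such that the augmented complex ⋯ → E_{-2} → E_{-1} → A → 0 is exact (π^E is surjective, ker π^E = im(d^E : E_{-2} → E_{-1}), and ker(d^E : E_{-i} → E_{-i+1}) = im(d^E : E_{-i-1} → E_{-i}) for all i ≥ 2), and an injective chain map ι : R → E with π^E ∘ ι_{-1} = π^R, such that in every degree ι(R_{-i}) is a direct summand of E_{-i} (it admits a projective O-module complement). -/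
/-!
Let `P → A` be a free resolution. As the `R n` are projective and `P` is exact, `π^R` lifts
degree by degree to a chain map `φ : R → P` over `A`. Let `D` be the sum of the disks
`R n = R n` in degrees `n + 1 → n`: it is exact, and `x ↦ (x, d x)` is a chain map `R → D`.
Then `E = D ⊕ P` is again a resolution of `A`, and `ι x = ((x, d x), φ x)` has the projection
onto `R n` as a left inverse, so its image has a complement, which is projective as a direct
summand of the projective module `E n`.
-/

open LinearMap

universe v

section

variable {O : Type*} [CommRing O] {M N P : Type*} [AddCommGroup M] [Module O M]
  [AddCommGroup N] [Module O N] [AddCommGroup P] [Module O P]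

theorem Module.Projective.exists_comp_eq_of_range_le [Module.Projective O M] (f : M →ₗ[O] N)
    (g : P →ₗ[O] N) (h : range f ≤ range g) : ∃ φ : M →ₗ[O] P, g ∘ₗ φ = f := by
  obtain ⟨φ, hφ⟩ := Module.projective_lifting_property g.rangeRestrict
    (f.codRestrict (range g) fun x => h ⟨x, rfl⟩) g.surjective_rangeRestrict
  exact ⟨φ, ext fun x => congrArg Subtype.val (LinearMap.congr_fun hφ x)⟩

noncomputable def Module.Projective.liftOfRangeLe [Module.Projective O M] (f : M →ₗ[O] N)
    (g : P →ₗ[O] N) (h : range f ≤ range g) : M →ₗ[O] P :=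
  (exists_comp_eq_of_range_le f g h).choose

theorem Module.Projective.apply_liftOfRangeLe [Module.Projective O M] (f : M →ₗ[O] N)
    (g : P →ₗ[O] N) (h : range f ≤ range g) (x : M) : g (liftOfRangeLe f g h x) = f x :=
  LinearMap.congr_fun (exists_comp_eq_of_range_le f g h).choose_spec x

theorem Module.Projective.of_isCompl [Module.Projective O M] {p q : Submodule O M}
    (h : IsCompl p q) : Module.Projective O q :=
  .of_split q.subtype (q.projectionOnto p h.symm) (ext (Submodule.projectionOnto_apply_left _))

theorem LinearMap.isCompl_range_ker_of_leftInverse {i : M →ₗ[O] N} {p : N →ₗ[O] M}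
    (h : Function.LeftInverse p i) : IsCompl (range i) (ker p) := by
  constructor
  · rw [Submodule.disjoint_def]
    rintro _ ⟨x, rfl⟩ hx
    rw [mem_ker, h x] at hx
    rw [hx, map_zero]
  · rw [codisjoint_iff, eq_top_iff]
    intro y _
    exact Submodule.mem_sup.2 ⟨i (p y), ⟨p y, rfl⟩, y - i (p y), by simp [h (p y)], by abel⟩

end

section Resolution

variable {O : Type*} [CommRing O] {A : Type*} [AddCommGroup A] [Module O A]
  {E : ℕ → Type*} [∀ n, AddCommGroup (E n)] [∀ n, Module O (E n)]

/-- Exactness of `⋯ → E 1 → E 0 → A → 0`; unlike Mathlib's `ProjectiveResolution`, no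
projectivity is required. -/
structure IsResolution (d : ∀ n, E (n + 1) →ₗ[O] E n) (π : E 0 →ₗ[O] A) : Prop where
  surjective : Function.Surjective π
  ker_eq_range_zero : ker π = range (d 0)
  ker_eq_range : ∀ n, ker (d n) = range (d (n + 1))

theorem IsResolution.prodMap {C : ℕ → Type*} [∀ n, AddCommGroup (C n)] [∀ n, Module O (C n)]
    {dC : ∀ n, C (n + 1) →ₗ[O] C n} {d : ∀ n, E (n + 1) →ₗ[O] E n} {π : E 0 →ₗ[O] A}
    (hC₀ : Function.Surjective (dC 0)) (hC : ∀ n, ker (dC n) = range (dC (n + 1)))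
    (hE : IsResolution d π) :
    IsResolution (E := fun n => C n × E n) (fun n => (dC n).prodMap (d n))
      (π ∘ₗ snd O (C 0) (E 0)) where
  surjective a := by
    obtain ⟨e, rfl⟩ := hE.surjective a
    exact ⟨(0, e), rfl⟩
  ker_eq_range_zero := by
    rw [range_prodMap, range_eq_top.2 hC₀, ← hE.ker_eq_range_zero, ker_comp]
    ext
    simp
  ker_eq_range n := by rw [ker_prodMap, range_prodMap, hC n, hE.ker_eq_range n]

end Resolution

namespace FreeResolution

variable (O : Type u) [CommRing O] (A : Type u) [AddCommGroup A] [Module O A]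

noncomputable abbrev ε (M : ModuleCat.{u} O) : (M →₀ O) →ₗ[O] M := Finsupp.linearCombination O id

noncomputable def syzygy : ℕ → ModuleCat.{u} O
  | 0 => ModuleCat.of O A
  | n + 1 => ModuleCat.of O (ker (ε O (syzygy n)))

abbrev module (n : ℕ) : Type u := syzygy O A n →₀ O

noncomputable def syzygyIncl (n : ℕ) : syzygy O A (n + 1) →ₗ[O] module O A n :=
  (ker (ε O (syzygy O A n))).subtype

noncomputable def d (n : ℕ) : module O A (n + 1) →ₗ[O] module O A n :=
  syzygyIncl O A n ∘ₗ ε O (syzygy O A (n + 1))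

noncomputable def π : module O A 0 →ₗ[O] A := ε O (syzygy O A 0)

theorem range_d (n : ℕ) : range (d O A n) = ker (ε O (syzygy O A n)) := by
  rw [d, range_comp_of_range_eq_top _
    (range_eq_top.2 (Finsupp.linearCombination_id_surjective _ _))]
  exact Submodule.range_subtype _

theorem ker_d (n : ℕ) : ker (d O A n) = ker (ε O (syzygy O A (n + 1))) :=
  ker_comp_of_ker_eq_bot _ (Submodule.ker_subtype _)

theorem isResolution : IsResolution (d O A) (π O A) where
  surjective := Finsupp.linearCombination_id_surjective O A
  ker_eq_range_zero := (range_d O A 0).symm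
  ker_eq_range n := (ker_d O A n).trans (range_d O A (n + 1)).symm

end FreeResolution

section ChainLift

variable {O : Type*} [CommRing O] {A : Type*} [AddCommGroup A] [Module O A]
  {R : ℕ → Type*} [∀ n, AddCommGroup (R n)] [∀ n, Module O (R n)]
  [∀ n, Module.Projective O (R n)]
  {dR : ∀ n, R (n + 1) →ₗ[O] R n} (hdR : ∀ n, ∀ x : R (n + 2), dR n (dR (n + 1) x) = 0)
  {πR : R 0 →ₗ[O] A} (hπR : ∀ x : R 1, πR (dR 0 x) = 0)
  {P : ℕ → Type*} [∀ n, AddCommGroup (P n)] [∀ n, Module O (P n)]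
  {dP : ∀ n, P (n + 1) →ₗ[O] P n} {πP : P 0 →ₗ[O] A} (hP : IsResolution dP πP)

open Module.Projective

/-- The lift in degree `n`, together with the condition that allows lifting in degree `n + 1`. -/
noncomputable def chainLiftAux : ∀ n, {f : R n →ₗ[O] P n // range (f ∘ₗ dR n) ≤ range (dP n)}
  | 0 => ⟨liftOfRangeLe πR πP (by rw [range_eq_top.2 hP.surjective]; exact le_top), by
      rintro _ ⟨x, rfl⟩
      rw [← hP.ker_eq_range_zero, mem_ker, comp_apply, apply_liftOfRangeLe, hπR]⟩
  | n + 1 => ⟨liftOfRangeLe (O := O) ((chainLiftAux n).1 ∘ₗ dR n) (dP n) (chainLiftAux n).2, by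
      rintro _ ⟨x, rfl⟩
      rw [← hP.ker_eq_range n, mem_ker, comp_apply, apply_liftOfRangeLe, comp_apply, hdR, map_zero]⟩

noncomputable def chainLift (n : ℕ) : R n →ₗ[O] P n := (chainLiftAux hdR hπR hP n).1

theorem chainLift_comm_augmentation (x : R 0) : πP (chainLift hdR hπR hP 0 x) = πR x := by
  dsimp only [chainLift, chainLiftAux]
  exact apply_liftOfRangeLe _ _ _ x

theorem chainLift_comm_d (n : ℕ) (x : R (n + 1)) :
    dP n (chainLift hdR hπR hP (n + 1) x) = chainLift hdR hπR hP n (dR n x) := by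
  dsimp only [chainLift, chainLiftAux]
  exact apply_liftOfRangeLe _ _ _ x

end ChainLift

section Disk

variable (O : Type*) [CommRing O] (R : ℕ → Type v) [∀ n, AddCommGroup (R n)] [∀ n, Module O (R n)]

/-- `Shifted O R n` is `R (n - 1)`, with `Shifted O R 0 = 0`. -/
def Shifted : ℕ → ModuleCat.{v} O
  | 0 => ModuleCat.of O PUnit
  | n + 1 => ModuleCat.of O (R n)

instance [∀ n, Module.Projective O (R n)] : ∀ n, Module.Projective O (Shifted O R n)
  | 0 => inferInstanceAs (Module.Projective O PUnit.{v + 1})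
  | n + 1 => inferInstanceAs (Module.Projective O (R n))

instance : Subsingleton (Shifted O R 0) := inferInstanceAs (Subsingleton PUnit.{v + 1})

def shiftedEquiv (n : ℕ) : Shifted O R (n + 1) ≃ₗ[O] R n := LinearEquiv.refl O (R n)

/-- The differential of the sum of the disks `R n = R n` in degrees `n + 1 → n`, i.e. of the cone
of the identity of `R` in split coordinates. -/
noncomputable def diskD (n : ℕ) : R (n + 1) × Shifted O R (n + 1) →ₗ[O] R n × Shifted O R n :=
  inl O (R n) (Shifted O R n) ∘ₗ (shiftedEquiv O R n).toLinearMap ∘ₗ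
    snd O (R (n + 1)) (Shifted O R (n + 1))

theorem ker_diskD (n : ℕ) :
    ker (diskD O R n) = range (inl O (R (n + 1)) (Shifted O R (n + 1))) := by
  rw [diskD, ker_comp_of_ker_eq_bot _ (Submodule.ker_inl ..),
    ker_comp_of_ker_eq_bot _ (LinearEquiv.ker _), ker_snd]

theorem range_diskD (n : ℕ) : range (diskD O R n) = range (inl O (R n) (Shifted O R n)) := by
  rw [diskD, range_comp_of_range_eq_top _
    ((range_comp_of_range_eq_top _ (Submodule.range_snd ..)).trans (LinearEquiv.range _))]

theorem diskD_zero_surjective : Function.Surjective (diskD O R 0) :=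
  fun y => ⟨(0, y.1), Prod.ext rfl (Subsingleton.elim _ _)⟩

variable {O R} (dR : ∀ n, R (n + 1) →ₗ[O] R n)

noncomputable def toShifted : ∀ n, R n →ₗ[O] Shifted O R n
  | 0 => 0
  | n + 1 => dR n

noncomputable def toDisk (n : ℕ) : R n →ₗ[O] R n × Shifted O R n :=
  LinearMap.id.prod (toShifted dR n)

theorem diskD_toDisk (hdR : ∀ n, ∀ x : R (n + 2), dR n (dR (n + 1) x) = 0) :
    ∀ n (x : R (n + 1)), diskD O R n (toDisk dR (n + 1) x) = toDisk dR n (dR n x)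
  | 0, _ => Prod.ext rfl (Subsingleton.elim _ _)
  | n + 1, x => Prod.ext rfl (hdR n x).symm

end Disk

/-- Over a commutative unital ring `O`, given an `O`-module `A` and a
chain complex `(R, d^R)` of projective `O`-modules concentrated in degrees `≤ -1`
(`R n` playing the role of `R_{-(n+1)}`) with an `O`-linear map `π^R : R_{-1} → A`
satisfying `π^R ∘ d^R = 0`, there exist a projective resolution `(E, d^E, π^E)` of `A`
and an injective chain map `ι : R → E` over `A` whose image is, in every degree, a
direct summand of `E` admitting a projective complement. -/
theorem statement3 (O : Type u) [CommRing O] (A : Type u) [AddCommGroup A] [Module O A]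
    (R : ℕ → Type u) [∀ n, AddCommGroup (R n)] [∀ n, Module O (R n)]
    (hRproj : ∀ n, Module.Projective O (R n))
    (dR : ∀ n, R (n + 1) →ₗ[O] R n)
    (hdR : ∀ n, ∀ x : R (n + 2), dR n (dR (n + 1) x) = 0)
    (πR : R 0 →ₗ[O] A)
    (hπR : ∀ x : R 1, πR (dR 0 x) = 0) :
    ∃ (E : ℕ → ModuleCat.{u} O) (dE : ∀ n, E (n + 1) →ₗ[O] E n) (πE : E 0 →ₗ[O] A)
      (ι : ∀ n, R n →ₗ[O] E n),
      -- E is a complex of projective modules ...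
      (∀ n, Module.Projective O (E n)) ∧
      -- ... which is a resolution of A:
      Function.Surjective πE ∧
      LinearMap.ker πE = LinearMap.range (dE 0) ∧
      (∀ n, LinearMap.ker (dE n) = LinearMap.range (dE (n + 1))) ∧
      -- ι is an injective chain map over A ...
      (∀ n, Function.Injective (ι n)) ∧
      (∀ n, ∀ x : R (n + 1), dE n (ι (n + 1) x) = ι n (dR n x)) ∧
      (∀ x : R 0, πE (ι 0 x) = πR x) ∧
      -- ... whose image is in each degree a direct summand with projective complement
      (∀ n, ∃ C : Submodule O (E n),
        Module.Projective O C ∧ IsCompl (LinearMap.range (ι n)) C) := by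
  have := hRproj
  have hP := FreeResolution.isResolution O A
  let φ := chainLift hdR hπR hP
  let ι n := (toDisk dR n).prod (φ n)
  have hι (n : ℕ) : Function.LeftInverse (fst O _ _ ∘ₗ fst O _ _) (ι n) := fun _ => rfl
  obtain ⟨hsurj, hker₀, hker⟩ := hP.prodMap (C := fun n => R n × Shifted O R n)
    (diskD_zero_surjective O R) fun n => (ker_diskD O R n).trans (range_diskD O R (n + 1)).symm
  refine ⟨fun n => ModuleCat.of O ((R n × Shifted O R n) × FreeResolution.module O A n),
    fun n => (diskD O R n).prodMap (FreeResolution.d O A n), FreeResolution.π O A ∘ₗ snd O _ _, ι,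
    fun n => inferInstance, hsurj, hker₀, hker, fun n => (hι n).injective,
    fun n x => Prod.ext (diskD_toDisk dR hdR n x) (chainLift_comm_d hdR hπR hP n x),
    chainLift_comm_augmentation hdR hπR hP, fun n => ?_⟩
  have hcompl := isCompl_range_ker_of_leftInverse (hι n)
  exact ⟨_, Module.Projective.of_isCompl hcompl, hcompl⟩
end
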